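/- arXiv:1808.00029 — 5 statements merged into one kernel-verified Lean document; each statement's English description precedes it below -/
import Mathlib

section
/- Let F be a field of characteristic zero containing a primitive 5th root of unity ζ. Then for every b ∈ F the following identity of polynomials in F[x] holds: −5x¹² − 62bx¹⁰ + 105b²x⁸ + 300b³x⁶ + 125b⁴x⁴ + 50b⁵x² − b⁶ = −5·(x⁴ + (−8ζ³ − 8ζ² + 2)b·x² + (−8ζ³ − 8ζ² + 5)b²)·(x⁴ + (2/5)b·x² + (1/5)b²)·(x⁴ + (8ζ³ + 8ζ² + 10)b·x² + (8ζ³ + 8ζ² + 13)b²). -/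
open Polynomial

/-- Factorization over `F ∋ ζ₅` of the polynomial `q₅` whose roots are the
abscissas of the points of order 5 of `y² = x³ + bx`, into three quartics. -/
theorem q₅_factorization_over_zeta₅ (F : Type*) [Field F] [CharZero F]
    (ζ : F) (hζ : IsPrimitiveRoot ζ 5) (b : F) :
    (-5 * X ^ 12 - C (62 * b) * X ^ 10 + C (105 * b ^ 2) * X ^ 8 + C (300 * b ^ 3) * X ^ 6
        + C (125 * b ^ 4) * X ^ 4 + C (50 * b ^ 5) * X ^ 2 - C (b ^ 6) : F[X]) =
      -5 * (X ^ 4 + C ((-8 * ζ ^ 3 - 8 * ζ ^ 2 + 2) * b) * X ^ 2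
              + C ((-8 * ζ ^ 3 - 8 * ζ ^ 2 + 5) * b ^ 2))
          * (X ^ 4 + C ((2 / 5) * b) * X ^ 2 + C ((1 / 5) * b ^ 2))
          * (X ^ 4 + C ((8 * ζ ^ 3 + 8 * ζ ^ 2 + 10) * b) * X ^ 2
              + C ((8 * ζ ^ 3 + 8 * ζ ^ 2 + 13) * b ^ 2)) := by
  have h1 : ζ ^ 5 = 1 := hζ.pow_eq_one
  have hne : ζ ≠ 1 := hζ.ne_one (by norm_num)
  have h5 : ζ ^ 4 + ζ ^ 3 + ζ ^ 2 + ζ + 1 = 0 := by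
    have h0 : (ζ - 1) * (ζ ^ 4 + ζ ^ 3 + ζ ^ 2 + ζ + 1) = 0 := by linear_combination h1
    rcases mul_eq_zero.mp h0 with h | h
    · exact absurd (sub_eq_zero.mp h) hne
    · exact h
  have hC : (C ζ) ^ 4 + (C ζ) ^ 3 + (C ζ) ^ 2 + C ζ + 1 = (0 : F[X]) := by
    have := congrArg (C : F →+* F[X]) h5
    simpa [map_add, map_pow] using this
  have hB : (5 : F[X]) * (X ^ 4 + C ((2 / 5) * b) * X ^ 2 + C ((1 / 5) * b ^ 2))
      = 5 * X ^ 4 + C (2 * b) * X ^ 2 + C (b ^ 2) := by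
    have h5C : (5 : F[X]) = C (5 : F) := by rw [map_ofNat]
    have e1 : C (5 : F) * C ((2 / 5) * b) = C (2 * b) := by rw [← C_mul]; congr 1; ring
    have e2 : C (5 : F) * C ((1 / 5) * b ^ 2) = C (b ^ 2) := by rw [← C_mul]; congr 1; ring
    rw [h5C]
    linear_combination X ^ 2 * e1 + e2
  calc (-5 * X ^ 12 - C (62 * b) * X ^ 10 + C (105 * b ^ 2) * X ^ 8 + C (300 * b ^ 3) * X ^ 6
        + C (125 * b ^ 4) * X ^ 4 + C (50 * b ^ 5) * X ^ 2 - C (b ^ 6) : F[X])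
      = -((X ^ 4 + C ((-8 * ζ ^ 3 - 8 * ζ ^ 2 + 2) * b) * X ^ 2
              + C ((-8 * ζ ^ 3 - 8 * ζ ^ 2 + 5) * b ^ 2))
          * (5 * X ^ 4 + C (2 * b) * X ^ 2 + C (b ^ 2)))
          * (X ^ 4 + C ((8 * ζ ^ 3 + 8 * ζ ^ 2 + 10) * b) * X ^ 2
              + C ((8 * ζ ^ 3 + 8 * ζ ^ 2 + 13) * b ^ 2)) := by
        simp only [map_mul, map_add, map_sub, map_neg, map_pow, map_ofNat, map_one]
        linear_combination ((1 - C ζ - (C ζ) ^ 2) *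
          ((64 : F[X]) * (C b) ^ 6 + 256 * (C b) ^ 5 * X ^ 2 + 640 * (C b) ^ 4 * X ^ 4
            + 768 * (C b) ^ 3 * X ^ 6 + 320 * (C b) ^ 2 * X ^ 8)) * hC
    _ = _ := by rw [← hB]; ring
end

section
/- Let F be a field of characteristic zero containing a primitive 5th root of unity ζ and an element i with i² = −1. Then for every b ∈ F the following identity of polynomials in F[x] holds: −5x¹² − 62bx¹⁰ + 105b²x⁸ + 300b³x⁶ + 125b⁴x⁴ + 50b⁵x² − b⁶ = −5·(x² + ((−4i+4)ζ³ + 4ζ² − 4iζ − 2i + 5)b)·(x² + (−4ζ³ + (−4i−4)ζ² − 4iζ − 2i + 1)b)·(x² + ((4i+4)ζ³ + 4ζ² + 4iζ + 2i + 5)b)·(x² + (−4ζ³ + (4i−4)ζ² + 4iζ + 2i + 1)b)·(x² + ((−2i+1)/5)b)·(x² + ((2i+1)/5)b). -/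
open Polynomial

/-- Complete factorization into six quadratics, over a field containing a
primitive 5th root of unity `ζ` and a square root `i` of `-1`, of the polynomial `q₅` whose roots
are the abscissas of the points of order 5 of `y² = x³ + bx`. -/
theorem q₅_factorization_over_zeta₅_i (F : Type*) [Field F] [CharZero F]
    (ζ : F) (hζ : IsPrimitiveRoot ζ 5) (i : F) (hi : i ^ 2 = -1) (b : F) :
    (-5 * X ^ 12 - C (62 * b) * X ^ 10 + C (105 * b ^ 2) * X ^ 8 + C (300 * b ^ 3) * X ^ 6
        + C (125 * b ^ 4) * X ^ 4 + C (50 * b ^ 5) * X ^ 2 - C (b ^ 6) : F[X]) =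
      -5 * (X ^ 2 + C (((-4 * i + 4) * ζ ^ 3 + 4 * ζ ^ 2 - 4 * i * ζ - 2 * i + 5) * b))
          * (X ^ 2 + C ((-4 * ζ ^ 3 + (-4 * i - 4) * ζ ^ 2 - 4 * i * ζ - 2 * i + 1) * b))
          * (X ^ 2 + C (((4 * i + 4) * ζ ^ 3 + 4 * ζ ^ 2 + 4 * i * ζ + 2 * i + 5) * b))
          * (X ^ 2 + C ((-4 * ζ ^ 3 + (4 * i - 4) * ζ ^ 2 + 4 * i * ζ + 2 * i + 1) * b))
          * (X ^ 2 + C (((-2 * i + 1) / 5) * b))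
          * (X ^ 2 + C (((2 * i + 1) / 5) * b)) := by
  have h5 : ζ ^ 5 = 1 := hζ.pow_eq_one
  have hne : ζ - 1 ≠ 0 := sub_ne_zero.mpr (hζ.ne_one (by norm_num))
  have hc : ζ ^ 4 + ζ ^ 3 + ζ ^ 2 + ζ + 1 = 0 := by
    have h : (ζ - 1) * (ζ ^ 4 + ζ ^ 3 + ζ ^ 2 + ζ + 1) = 0 := by linear_combination h5
    exact (mul_eq_zero.mp h).resolve_left hne
  apply Polynomial.funext
  intro x
  simp only [eval_mul, eval_add, eval_sub, eval_pow, eval_neg, eval_C, eval_X, eval_ofNat]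
  linear_combination (norm := ring1)
      ((144 : F) * b^6
      + (448 : F) * x^2 * b^5
      + (1120 : F) * x^4 * b^4
      + (960 : F) * x^6 * b^3
      + (400 : F) * x^8 * b^2
      + (400 : F) * ζ * b^6
      + (832 : F) * ζ * x^2 * b^5
      + (2016 : F) * ζ * x^4 * b^4
      + (64 : F) * ζ * x^6 * b^3
      + (-240 : F) * ζ * x^8 * b^2
      + (688 : F) * ζ^2 * b^6
      + (1344 : F) * ζ^2 * x^2 * b^5
      + (3360 : F) * ζ^2 * x^4 * b^4
      + (-192 : F) * ζ^2 * x^6 * b^3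
      + (-80 : F) * ζ^2 * x^8 * b^2
      + (1024 : F) * ζ^3 * b^6
      + (2048 : F) * ζ^3 * x^2 * b^5
      + (5120 : F) * ζ^3 * x^4 * b^4
      + (1536 : F) * ζ^4 * b^6
      + (3072 : F) * ζ^4 * x^2 * b^5
      + (7680 : F) * ζ^4 * x^4 * b^4
      + (1408 : F) * ζ^5 * b^6
      + (2688 : F) * ζ^5 * x^2 * b^5
      + (6784 : F) * ζ^5 * x^4 * b^4
      + (-640 : F) * ζ^5 * x^6 * b^3
      + (1280 : F) * ζ^6 * b^6
      + (2560 : F) * ζ^6 * x^2 * b^5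
      + (6400 : F) * ζ^6 * x^4 * b^4
      + (1024 : F) * ζ^7 * b^6
      + (2048 : F) * ζ^7 * x^2 * b^5
      + (5120 : F) * ζ^7 * x^4 * b^4
      + (512 : F) * ζ^8 * b^6
      + (1024 : F) * ζ^8 * x^2 * b^5
      + (2560 : F) * ζ^8 * x^4 * b^4) * hc
      + ((-140 : F) * b^6
      + (-336 : F) * x^2 * b^5
      + (-3704/5 : F) * x^4 * b^4
      + (-1328/5 : F) * x^6 * b^3
      + (-204/5 : F) * x^8 * b^2
      + (496/5 : F) * i^2 * b^6
      + (352/5 : F) * i^2 * x^2 * b^5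
      + (432/5 : F) * i^2 * x^4 * b^4
      + (-64/5 : F) * i^4 * b^6
      + (-544 : F) * ζ * b^6
      + (-1280 : F) * ζ * x^2 * b^5
      + (-3136 : F) * ζ * x^4 * b^4
      + (-1024 : F) * ζ * x^6 * b^3
      + (-160 : F) * ζ * x^8 * b^2
      + (2304/5 : F) * ζ * i^2 * b^6
      + (2048/5 : F) * ζ * i^2 * x^2 * b^5
      + (3328/5 : F) * ζ * i^2 * x^4 * b^4
      + (-512/5 : F) * ζ * i^4 * b^6
      + (-1264 : F) * ζ^2 * b^6
      + (-14912/5 : F) * ζ^2 * x^2 * b^5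
      + (-38432/5 : F) * ζ^2 * x^4 * b^4
      + (-1856 : F) * ζ^2 * x^6 * b^3
      + (-240 : F) * ζ^2 * x^8 * b^2
      + (6016/5 : F) * ζ^2 * i^2 * b^6
      + (5888/5 : F) * ζ^2 * i^2 * x^2 * b^5
      + (11392/5 : F) * ζ^2 * i^2 * x^4 * b^4
      + (-1792/5 : F) * ζ^2 * i^4 * b^6
      + (-2288 : F) * ζ^3 * b^6
      + (-25152/5 : F) * ζ^3 * x^2 * b^5
      + (-64032/5 : F) * ζ^3 * x^4 * b^4
      + (-1856 : F) * ζ^3 * x^6 * b^3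
      + (-240 : F) * ζ^3 * x^8 * b^2
      + (10624/5 : F) * ζ^3 * i^2 * b^6
      + (11008/5 : F) * ζ^3 * i^2 * x^2 * b^5
      + (24192/5 : F) * ζ^3 * i^2 * x^4 * b^4
      + (-768 : F) * ζ^3 * i^4 * b^6
      + (-18864/5 : F) * ζ^4 * b^6
      + (-37952/5 : F) * ζ^4 * x^2 * b^5
      + (-96032/5 : F) * ζ^4 * x^4 * b^4
      + (-1856 : F) * ζ^4 * x^6 * b^3
      + (-240 : F) * ζ^4 * x^8 * b^2
      + (16256/5 : F) * ζ^4 * i^2 * b^6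
      + (16128/5 : F) * ζ^4 * i^2 * x^2 * b^5
      + (36992/5 : F) * ζ^4 * i^2 * x^4 * b^4
      + (-5888/5 : F) * ζ^4 * i^4 * b^6
      + (-25088/5 : F) * ζ^5 * b^6
      + (-48384/5 : F) * ζ^5 * x^2 * b^5
      + (-123904/5 : F) * ζ^5 * x^4 * b^4
      + (-1280 : F) * ζ^5 * x^6 * b^3
      + (21248/5 : F) * ζ^5 * i^2 * b^6
      + (18944/5 : F) * ζ^5 * i^2 * x^2 * b^5
      + (8960 : F) * ζ^5 * i^2 * x^4 * b^4
      + (-7168/5 : F) * ζ^5 * i^4 * b^6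
      + (-29072/5 : F) * ζ^6 * b^6
      + (-52672/5 : F) * ζ^6 * x^2 * b^5
      + (-133472/5 : F) * ζ^6 * x^4 * b^4
      + (-192 : F) * ζ^6 * x^6 * b^3
      + (-80 : F) * ζ^6 * x^8 * b^2
      + (23168/5 : F) * ζ^6 * i^2 * b^6
      + (18688/5 : F) * ζ^6 * i^2 * x^2 * b^5
      + (46464/5 : F) * ζ^6 * i^2 * x^4 * b^4
      + (-7424/5 : F) * ζ^6 * i^4 * b^6
      + (-29824/5 : F) * ζ^7 * b^6
      + (-9344 : F) * ζ^7 * x^2 * b^5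
      + (-23424 : F) * ζ^7 * x^4 * b^4
      + (640 : F) * ζ^7 * x^6 * b^3
      + (4096 : F) * ζ^7 * i^2 * b^6
      + (14848/5 : F) * ζ^7 * i^2 * x^2 * b^5
      + (7680 : F) * ζ^7 * i^2 * x^4 * b^4
      + (-6144/5 : F) * ζ^7 * i^4 * b^6
      + (-27008/5 : F) * ζ^8 * b^6
      + (-7808 : F) * ζ^8 * x^2 * b^5
      + (-19584 : F) * ζ^8 * x^4 * b^4
      + (640 : F) * ζ^8 * x^6 * b^3
      + (16896/5 : F) * ζ^8 * i^2 * b^6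
      + (9728/5 : F) * ζ^8 * i^2 * x^2 * b^5
      + (5120 : F) * ζ^8 * i^2 * x^4 * b^4
      + (-4096/5 : F) * ζ^8 * i^4 * b^6
      + (-19584/5 : F) * ζ^9 * b^6
      + (-5248 : F) * ζ^9 * x^2 * b^5
      + (-13184 : F) * ζ^9 * x^4 * b^4
      + (640 : F) * ζ^9 * x^6 * b^3
      + (11264/5 : F) * ζ^9 * i^2 * b^6
      + (4608/5 : F) * ζ^9 * i^2 * x^2 * b^5
      + (2560 : F) * ζ^9 * i^2 * x^4 * b^4
      + (-2048/5 : F) * ζ^9 * i^4 * b^6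
      + (-12544/5 : F) * ζ^10 * b^6
      + (-2560 : F) * ζ^10 * x^2 * b^5
      + (-6400 : F) * ζ^10 * x^4 * b^4
      + (5376/5 : F) * ζ^10 * i^2 * b^6
      + (512 : F) * ζ^10 * i^2 * x^2 * b^5
      + (1280 : F) * ζ^10 * i^2 * x^4 * b^4
      + (-1024/5 : F) * ζ^10 * i^4 * b^6
      + (-6656/5 : F) * ζ^11 * b^6
      + (-1024 : F) * ζ^11 * x^2 * b^5
      + (-2560 : F) * ζ^11 * x^4 * b^4
      + (2048/5 : F) * ζ^11 * i^2 * b^6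
      + (-2304/5 : F) * ζ^12 * b^6
      + (-512 : F) * ζ^12 * x^2 * b^5
      + (-1280 : F) * ζ^12 * x^4 * b^4
      + (1024/5 : F) * ζ^12 * i^2 * b^6) * hi
end

section
/- Let K be a number field with algebraic closure K̄, let ζ ∈ K̄ be a primitive 5th root of unity, let i ∈ K̄ satisfy i² = −1, and set θ₁ := −((−4i+4)ζ³ + 4ζ² − 4iζ − 2i + 5). Let b ∈ K be nonzero and let E: y² = x³ + bx. Choose x₁ ∈ K̄ with x₁² = θ₁b and y₁ ∈ K̄ with y₁² = (θ₁ + 1)b·x₁. Then P₁ := (x₁, y₁) is a point of E(K̄) of exact order 5, the point φ₁(P₁) := (−x₁, i·y₁) also lies in E(K̄) and has exact order 5, φ₁(P₁) is not a multiple of P₁, and {P₁, φ₁(P₁)} is a ℤ/5ℤ-basis of the 5-torsion subgroup E[5] of E(K̄). -/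
noncomputable section

/-- The elliptic curve `y² = x³ + bx + c` as an affine Weierstrass curve. -/
def curveBC {F : Type*} [Field F] (b c : F) : WeierstrassCurve.Affine F :=
  { a₁ := 0, a₂ := 0, a₃ := 0, a₄ := b, a₆ := c }

open Classical in
/-- `{P, Q}` is a `ℤ/mℤ`-basis of the `m`-torsion subgroup `E[m]`. -/
def IsTorsionBasis {F : Type*} [Field F] {W : WeierstrassCurve.Affine F} (m : ℕ)
    (P Q : W.Point) : Prop :=
  m • P = 0 ∧ m • Q = 0 ∧
    (∀ R : W.Point, m • R = 0 → ∃ a b : ℤ, R = a • P + b • Q) ∧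
    (∀ a b : ℤ, a • P + b • Q = 0 → (m : ℤ) ∣ a ∧ (m : ℤ) ∣ b)

/-!
For a point `P = (x, y)` of `y² = x³ + bx` with `y ≠ 0` and `2P ≠ ±P` we have `5P = 0` iff
`3P = -2P` iff `x(3P) = x(2P)`, and the addition formulas give
`ψ₅(x) = 64 y⁶ (x(2P) - x)² (x(2P) - x(3P))` for the 5-division polynomial `ψ₅`. If `x² = θb`
then `ψ₅(x) = b⁶ (5θ² + 2θ + 1) (θ⁴ + 12θ³ - 26θ² - 52θ + 1)`, and `θ₁` is a root of the
quartic, so `P₁` and `φ₁(P₁)` (whose coordinates satisfy the same two equations) are 5-torsion.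
The nonzero multiples of `P₁` have `x`-coordinate `x₁` or `(θ₁ - 1)² x₁ / (4θ₁(θ₁ + 1))`, never
`-x₁`, so `φ₁(P₁) ∉ ⟨P₁⟩` and the 25 points `aP₁ + cφ₁(P₁)` are distinct. Since `ψ₅` has degree
12 and at most two points share an `x`-coordinate, `E[5]` has at most 25 points, so these are all
of them.
-/

open WeierstrassCurve.Affine WeierstrassCurve.Affine.Point Polynomial

section AddCommGroup

variable {G : Type*} [AddCommGroup G] {p : ℕ} {P Q : G}

lemma dvd_and_dvd_of_zsmul_add_zsmul_eq_zero [Fact p.Prime] (hP : addOrderOf P = p)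
    (hQ : p • Q = 0) (hQP : ∀ n : ℤ, Q ≠ n • P) {a c : ℤ} (h : a • P + c • Q = 0) :
    (p : ℤ) ∣ a ∧ (p : ℤ) ∣ c := by
  have hc : (p : ℤ) ∣ c := by
    by_contra hc
    obtain ⟨u, v, huv⟩ :=
      ((Nat.prime_iff_prime_int.mp Fact.out).coprime_iff_not_dvd.mpr hc).symm
    refine hQP (-(u * a)) ?_
    calc Q = (u * c + v * p) • Q := by rw [huv, one_zsmul]
      _ = u • (a • P + c • Q) - (u * a) • P + v • ((p : ℤ) • Q) := by module
      _ = (-(u * a)) • P := by rw [h, natCast_zsmul, hQ]; simp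
  obtain ⟨k, rfl⟩ := hc
  have hcQ : ((p : ℤ) * k) • Q = 0 := by rw [mul_comm, mul_zsmul, natCast_zsmul, hQ, smul_zero]
  rw [hcQ, add_zero] at h
  exact ⟨hP ▸ addOrderOf_dvd_iff_zsmul_eq_zero.mpr h, dvd_mul_right _ _⟩

lemma exists_eq_zsmul_add_zsmul_of_card_le [NeZero p]
    (hind : ∀ a c : ℤ, a • P + c • Q = 0 → (p : ℤ) ∣ a ∧ (p : ℤ) ∣ c)
    (hP : p • P = 0) (hQ : p • Q = 0)
    (hcard : ∀ S : Finset G, (∀ R ∈ S, p • R = 0) → S.card ≤ p ^ 2)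
    {R : G} (hR : p • R = 0) : ∃ a c : ℤ, R = a • P + c • Q := by
  classical
  let f : ZMod p × ZMod p → G := fun ac => (ac.1.val : ℤ) • P + (ac.2.val : ℤ) • Q
  have hf : Function.Injective f := by
    rintro ⟨a, c⟩ ⟨a', c'⟩ he
    have h0 : ((a.val : ℤ) - a'.val) • P + ((c.val : ℤ) - c'.val) • Q = 0 := by
      rw [← sub_eq_zero.mpr he]; simp only [f]; module
    obtain ⟨ha, hc⟩ := hind _ _ h0
    rw [← ZMod.intCast_zmod_eq_zero_iff_dvd] at ha hc
    push_cast [ZMod.natCast_zmod_val, sub_eq_zero] at ha hc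
    rw [ha, hc]
  have hfp : ∀ ac, p • f ac = 0 := fun ac => by
    simp only [f, smul_add, smul_comm p _ P, smul_comm p _ Q, hP, hQ, smul_zero, add_zero]
  by_contra hRf
  have hRS : R ∉ Finset.univ.image f := fun hmem => by
    obtain ⟨ac, -, hac⟩ := Finset.mem_image.mp hmem
    exact hRf ⟨_, _, hac.symm⟩
  have := hcard (insert R (Finset.univ.image f)) <| by
    simp only [Finset.forall_mem_insert, Finset.forall_mem_image]
    exact ⟨hR, fun ac _ => hfp ac⟩
  rw [Finset.card_insert_of_notMem hRS, Finset.card_image_of_injective _ hf] at this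
  simp [ZMod.card, sq] at this

end AddCommGroup

section WeierstrassCurve

open scoped Classical

variable {F : Type*} [Field F] {W : WeierstrassCurve.Affine F}

lemma card_le_two_mul_card_image_xRep (S : Finset W.Point) :
    S.card ≤ 2 * (S.image xRep).card := by
  refine Finset.card_le_mul_card_image S 2 fun v hv => ?_
  obtain ⟨P, -, rfl⟩ := Finset.mem_image.mp hv
  calc (S.filter fun Q => Q.xRep = P.xRep).card ≤ ({P, -P} : Finset W.Point).card :=
        Finset.card_le_card fun Q hQ => by
          simpa [xRep_eq_xRep_iff] using (Finset.mem_filter.mp hQ).2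
    _ ≤ 2 := Finset.card_le_two

lemma five_smul_eq_zero_iff_xRep_three_smul_eq {P : W.Point} (hP : P ≠ 0) :
    5 • P = 0 ↔ (3 • P).xRep = (2 • P).xRep := by
  have h1 : 3 • P - 2 • P = P := by abel
  rw [xRep_eq_xRep_iff, ← sub_eq_zero (a := 3 • P), ← add_eq_zero_iff_eq_neg, h1, ← add_nsmul]
  simp [hP]

lemma xRep_zsmul_of_five_smul_eq_zero {P : W.Point} (hP : 5 • P = 0) (n : ℤ) :
    (n • P).xRep = (0 : W.Point).xRep ∨ (n • P).xRep = P.xRep ∨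
      (n • P).xRep = (2 • P).xRep := by
  by_cases hP0 : P = 0
  · simp [hP0]
  have hord : addOrderOf P = 5 := addOrderOf_eq_prime (hp := ⟨Nat.prime_five⟩) hP hP0
  rw [← mod_addOrderOf_zsmul, hord]
  have h3 : (3 : ℤ) • P = -(2 • P) := by
    rw [ofNat_zsmul, eq_neg_iff_add_eq_zero, ← add_nsmul, hP]
  have h4 : (4 : ℤ) • P = -P := by
    rw [ofNat_zsmul, eq_neg_iff_add_eq_zero, ← succ_nsmul, hP]
  have hlt : n % 5 < 5 := Int.emod_lt_of_pos n (by norm_num)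
  have hnn : 0 ≤ n % 5 := Int.emod_nonneg n (by norm_num)
  interval_cases n % 5 <;> simp [h3, h4, ofNat_zsmul]

lemma isTorsionBasis_of_card_le {p : ℕ} [Fact p.Prime] {P Q : W.Point} (hP : addOrderOf P = p)
    (hQ : p • Q = 0) (hQP : ∀ n : ℤ, Q ≠ n • P)
    (hcard : ∀ S : Finset W.Point, (∀ R ∈ S, p • R = 0) → S.card ≤ p ^ 2) :
    IsTorsionBasis p P Q := by
  have hP' : p • P = 0 := hP ▸ addOrderOf_nsmul_eq_zero P
  have hind := fun a c => dvd_and_dvd_of_zsmul_add_zsmul_eq_zero (a := a) (c := c) hP hQ hQP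
  exact ⟨hP', hQ, fun R hR => exists_eq_zsmul_add_zsmul_of_card_le hind hP' hQ hcard hR, hind⟩

end WeierstrassCurve

section CurveBC

open scoped Classical

variable {F : Type*} [Field F] {b c x y : F}

lemma curveBC_equation_iff : (curveBC b c).Equation x y ↔ y ^ 2 = x ^ 3 + b * x + c := by
  simp [equation_iff, curveBC]

lemma curveBC_negY : (curveBC b c).negY x y = -y := by
  simp [negY, curveBC]

lemma curveBC_addX (x₁ x₂ ℓ : F) : (curveBC b c).addX x₁ x₂ ℓ = ℓ ^ 2 - x₁ - x₂ := by
  simp [addX, curveBC]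

lemma curveBC_addY (x₁ x₂ y₁ ℓ : F) :
    (curveBC b c).addY x₁ x₂ y₁ ℓ = -(ℓ * (ℓ ^ 2 - x₁ - x₂ - x₁) + y₁) := by
  simp only [addY, negAddY, negY, addX, curveBC]
  ring

/-- The 5-division polynomial of `y² = x³ + bx`. -/
def fiveDivisionPolynomial (b : F) : F[X] :=
  C 5 * X ^ 12 + C (62 * b) * X ^ 10 - C (105 * b ^ 2) * X ^ 8 - C (300 * b ^ 3) * X ^ 6
    - C (125 * b ^ 4) * X ^ 4 - C (50 * b ^ 5) * X ^ 2 + C (b ^ 6)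

/-- Here `ℓ` is the tangent slope at `P = (x, y)`, `x₂ = x(2P)` and `m` the slope of the chord
through `2P` and `P`, so that `m² - x₂ - x = x(3P)`. -/
lemma eval_fiveDivisionPolynomial_eq {ℓ x₂ m : F} (hy : y ^ 2 = x ^ 3 + b * x)
    (hℓ : ℓ * (2 * y) = 3 * x ^ 2 + b) (hx₂ : x₂ = ℓ ^ 2 - 2 * x)
    (hm : m * (x₂ - x) = -(ℓ * (x₂ - x) + y) - y) :
    (fiveDivisionPolynomial b).eval x = 64 * y ^ 6 * (x₂ - x) ^ 2 * (x₂ - (m ^ 2 - x₂ - x)) := by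
  have hd : 4 * y ^ 2 * (x₂ - x) = -(3 * x ^ 4 + 6 * b * x ^ 2 - b ^ 2) := by
    rw [hx₂]
    linear_combination (ℓ * (2 * y) + 3 * x ^ 2 + b) * hℓ - 12 * x * hy
  have hx₃ : (x₂ - x) ^ 2 * ((m ^ 2 - x₂ - x) - x₂) =
      -(x₂ - x) ^ 3 + 2 * (3 * x ^ 2 + b) * (x₂ - x) + 4 * y ^ 2 := by
    linear_combination (m * (x₂ - x) - ℓ * (x₂ - x) - 2 * y) * hm - (x₂ - x) ^ 2 * hx₂
      + 2 * (x₂ - x) * hℓ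
  calc (fiveDivisionPolynomial b).eval x
      = 32 * (x ^ 3 + b * x) ^ 2 * (3 * x ^ 2 + b) * (3 * x ^ 4 + 6 * b * x ^ 2 - b ^ 2)
        - (3 * x ^ 4 + 6 * b * x ^ 2 - b ^ 2) ^ 3 - 256 * (x ^ 3 + b * x) ^ 4 := by
        simp [fiveDivisionPolynomial]; ring
    _ = 32 * (y ^ 2) ^ 2 * (3 * x ^ 2 + b) * (-(4 * y ^ 2 * (x₂ - x)))
        - (-(4 * y ^ 2 * (x₂ - x))) ^ 3 - 256 * (y ^ 2) ^ 4 := by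
        rw [← hy, hd, neg_neg]
    _ = _ := by linear_combination 64 * y ^ 6 * hx₃

variable [CharZero F]

lemma curveBC_y_ne_negY (hy : y ≠ 0) : y ≠ (curveBC b c).negY x y := by
  rw [curveBC_negY]
  contrapose! hy
  linear_combination hy / 2

lemma curveBC_nonsingular (h : y ^ 2 = x ^ 3 + b * x + c) (hy : y ≠ 0) :
    (curveBC b c).Nonsingular x y := by
  refine (nonsingular_iff x y).mpr ⟨curveBC_equation_iff.mpr h, .inr ?_⟩
  simpa [curveBC_negY] using curveBC_y_ne_negY (b := b) (c := c) (x := x) hy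

lemma curveBC_slope_self_mul (hy : y ≠ 0) :
    (curveBC b c).slope x x y y * (2 * y) = 3 * x ^ 2 + b := by
  rw [slope_of_Y_ne rfl (curveBC_y_ne_negY hy), curveBC_negY]
  simp only [curveBC]
  field_simp
  ring

lemma xRep_two_smul_some (h : (curveBC b 0).Nonsingular x y) (hy : y ≠ 0) :
    (2 • some _ _ h).xRep = ![(x ^ 2 - b) ^ 2 / (4 * y ^ 2), 1] := by
  have hxy : y ^ 2 = x ^ 3 + b * x := by simpa using curveBC_equation_iff.mp h.1
  have hℓ := curveBC_slope_self_mul (b := b) (c := 0) (x := x) hy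
  rw [two_nsmul, add_self_of_Y_ne (curveBC_y_ne_negY hy), xRep_some, curveBC_addX]
  congr 1
  rw [eq_div_iff (by simpa using hy)]
  linear_combination ((curveBC b 0).slope x x y y * (2 * y) + 3 * x ^ 2 + b) * hℓ - 8 * x * hxy

lemma natDegree_fiveDivisionPolynomial : (fiveDivisionPolynomial b).natDegree = 12 := by
  unfold fiveDivisionPolynomial
  compute_degree!

lemma fiveDivisionPolynomial_ne_zero : fiveDivisionPolynomial b ≠ 0 :=
  ne_zero_of_natDegree_gt (n := 0) (by rw [natDegree_fiveDivisionPolynomial]; norm_num)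

lemma five_smul_some_eq_zero_iff (h : (curveBC b 0).Nonsingular x y) (hy : y ≠ 0)
    (hx : (2 • some _ _ h).xRep ≠ (some _ _ h).xRep) :
    5 • some _ _ h = 0 ↔ (fiveDivisionPolynomial b).eval x = 0 := by
  have hxy : y ^ 2 = x ^ 3 + b * x := by simpa using curveBC_equation_iff.mp h.1
  set ℓ := (curveBC b 0).slope x x y y
  set x₂ := (curveBC b 0).addX x x ℓ with hx₂def
  set y₂ := (curveBC b 0).addY x x y ℓ with hy₂def
  have hx₂ℓ : x₂ = ℓ ^ 2 - 2 * x := by rw [hx₂def, curveBC_addX]; ring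
  have h₂ : (curveBC b 0).Nonsingular x₂ y₂ :=
    nonsingular_add h h fun hxy => curveBC_y_ne_negY hy hxy.2
  have e2 : 2 • some _ _ h = some _ _ h₂ := by
    rw [two_nsmul]; exact add_self_of_Y_ne (curveBC_y_ne_negY hy)
  have hx₂ : x₂ ≠ x := fun he => hx (by rw [e2, xRep_some, xRep_some, he])
  have e3 : 3 • some _ _ h = some _ _ (nonsingular_add h₂ h fun hxy => hx₂ hxy.1) := by
    rw [succ_nsmul, e2]; exact add_of_X_ne hx₂
  have hm : (curveBC b 0).slope x₂ x y₂ y * (x₂ - x) = -(ℓ * (x₂ - x) + y) - y := by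
    rw [slope_of_X_ne hx₂, div_mul_cancel₀ _ (sub_ne_zero.mpr hx₂), hy₂def, curveBC_addY, hx₂ℓ]
    ring
  rw [five_smul_eq_zero_iff_xRep_three_smul_eq (some_ne_zero h), e2, e3, xRep_some, xRep_some,
    eval_fiveDivisionPolynomial_eq hxy (curveBC_slope_self_mul hy) hx₂ℓ hm, curveBC_addX]
  have h64 : (64 : F) * y ^ 6 * (x₂ - x) ^ 2 ≠ 0 := by simp [hy, sub_ne_zero.mpr hx₂]
  simp only [Matrix.vecCons_inj, and_true]
  rw [mul_eq_zero, or_iff_right h64, sub_eq_zero, eq_comm]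

lemma eval_fiveDivisionPolynomial_eq_zero (h : (curveBC b 0).Nonsingular x y)
    (h5 : 5 • some _ _ h = 0) : (fiveDivisionPolynomial b).eval x = 0 := by
  have hord : addOrderOf (some _ _ h) = 5 :=
    addOrderOf_eq_prime (hp := ⟨Nat.prime_five⟩) h5 (some_ne_zero h)
  have hy : y ≠ 0 := by
    rintro rfl
    have h2 : 2 • some _ _ h = 0 := by
      rw [two_nsmul]; exact add_self_of_Y_eq (by rw [curveBC_negY, _root_.neg_zero])
    have := addOrderOf_dvd_of_nsmul_eq_zero h2
    rw [hord] at this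
    norm_num at this
  refine (five_smul_some_eq_zero_iff h hy fun hxRep => ?_).mp h5
  rcases xRep_eq_xRep_iff.mp hxRep with h1 | h1
  · rw [two_nsmul, add_eq_right] at h1
    exact some_ne_zero h h1
  · have h3 : 3 • some _ _ h = 0 := by rw [succ_nsmul, h1, neg_add_cancel]
    have := addOrderOf_dvd_of_nsmul_eq_zero h3
    rw [hord] at this
    norm_num at this

lemma card_le_of_forall_five_smul_eq_zero (S : Finset (curveBC b 0).Point)
    (hS : ∀ R ∈ S, 5 • R = 0) : S.card ≤ 5 ^ 2 := by
  have himage : (S.erase 0).image xRep ⊆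
      (fiveDivisionPolynomial b).roots.toFinset.image fun x => ![x, 1] := by
    intro v hv
    obtain ⟨R, hR, rfl⟩ := Finset.mem_image.mp hv
    obtain ⟨hR0, hRS⟩ := Finset.mem_erase.mp hR
    rcases R with _ | ⟨x, y, h⟩
    · exact absurd zero_def.symm hR0
    · refine Finset.mem_image.mpr ⟨_, ?_, (xRep_some h).symm⟩
      simpa [fiveDivisionPolynomial_ne_zero] using
        eval_fiveDivisionPolynomial_eq_zero h (hS _ hRS)
  have hroots : (fiveDivisionPolynomial b).roots.toFinset.card ≤ 12 :=
    (Multiset.toFinset_card_le _).trans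
      ((card_roots' _).trans natDegree_fiveDivisionPolynomial.le)
  have := card_le_two_mul_card_image_xRep (S.erase 0)
  have := (Finset.card_le_card himage).trans Finset.card_image_le
  have := Finset.pred_card_le_card_erase (s := S) (a := 0)
  omega

end CurveBC

section QuarticRoot

lemma quartic_eq_zero_of_isPrimitiveRoot {R : Type*} [CommRing R] [IsDomain R] {ζ i θ : R}
    (hζ : IsPrimitiveRoot ζ 5) (hi : i ^ 2 = -1)
    (hθ : θ = -((-4 * i + 4) * ζ ^ 3 + 4 * ζ ^ 2 - 4 * i * ζ - 2 * i + 5)) :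
    θ ^ 4 + 12 * θ ^ 3 - 26 * θ ^ 2 - 52 * θ + 1 = 0 := by
  have hΦ := hζ.geom_sum_eq_zero (by norm_num)
  simp only [Finset.sum_range_succ, Finset.sum_range_zero] at hΦ
  subst hθ
  grind

open scoped Classical

variable {F : Type*} [Field F] [CharZero F] {b θ x y : F}

lemma curveBC_nonsingular_of_sq_eq_theta_mul (hb : b ≠ 0)
    (hθ : θ ^ 4 + 12 * θ ^ 3 - 26 * θ ^ 2 - 52 * θ + 1 = 0)
    (hx : x ^ 2 = θ * b) (hy : y ^ 2 = (θ + 1) * b * x) :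
    (curveBC b 0).Nonsingular x y :=
  curveBC_nonsingular (by linear_combination hy - x * hx) (by grind)

lemma xRep_two_smul_some_of_sq_eq_theta_mul (hb : b ≠ 0)
    (hθ : θ ^ 4 + 12 * θ ^ 3 - 26 * θ ^ 2 - 52 * θ + 1 = 0)
    (hx : x ^ 2 = θ * b) (hy : y ^ 2 = (θ + 1) * b * x) (h : (curveBC b 0).Nonsingular x y) :
    (2 • some _ _ h).xRep = ![(θ - 1) ^ 2 / (4 * θ * (θ + 1)) * x, 1] := by
  have hy0 : y ≠ 0 := by grind
  have hθ0 : θ ≠ 0 := by grind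
  have hθ1 : θ + 1 ≠ 0 := by grind
  rw [xRep_two_smul_some h hy0]
  congr 1
  rw [div_eq_iff (by simpa using hy0), hy]
  field_simp
  linear_combination (θ * x ^ 2 - b) * hx

lemma five_smul_some_eq_zero_of_sq_eq_theta_mul (hb : b ≠ 0)
    (hθ : θ ^ 4 + 12 * θ ^ 3 - 26 * θ ^ 2 - 52 * θ + 1 = 0)
    (hx : x ^ 2 = θ * b) (hy : y ^ 2 = (θ + 1) * b * x) (h : (curveBC b 0).Nonsingular x y) :
    5 • some _ _ h = 0 := by
  have hx0 : x ≠ 0 := by grind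
  refine (five_smul_some_eq_zero_iff h (by grind) ?_).mpr ?_
  · rw [xRep_two_smul_some_of_sq_eq_theta_mul hb hθ hx hy, xRep_some]
    simp only [ne_eq, Matrix.vecCons_inj, and_true]
    grind
  · calc (fiveDivisionPolynomial b).eval x
        = 5 * (x ^ 2) ^ 6 + 62 * b * (x ^ 2) ^ 5 - 105 * b ^ 2 * (x ^ 2) ^ 4
          - 300 * b ^ 3 * (x ^ 2) ^ 3 - 125 * b ^ 4 * (x ^ 2) ^ 2 - 50 * b ^ 5 * x ^ 2 + b ^ 6 := by
          simp [fiveDivisionPolynomial]; ring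
      _ = b ^ 6 * (5 * θ ^ 2 + 2 * θ + 1) * (θ ^ 4 + 12 * θ ^ 3 - 26 * θ ^ 2 - 52 * θ + 1) := by
          rw [hx]; ring
      _ = 0 := by rw [hθ, mul_zero]

lemma some_ne_zsmul_some_of_sq_eq_theta_mul (hb : b ≠ 0)
    (hθ : θ ^ 4 + 12 * θ ^ 3 - 26 * θ ^ 2 - 52 * θ + 1 = 0)
    (hx : x ^ 2 = θ * b) (hy : y ^ 2 = (θ + 1) * b * x) (h : (curveBC b 0).Nonsingular x y)
    {y' : F} (h' : (curveBC b 0).Nonsingular (-x) y') (n : ℤ) :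
    some _ _ h' ≠ n • some _ _ h := by
  have hx0 : x ≠ 0 := by grind
  intro hn
  have hmul := xRep_zsmul_of_five_smul_eq_zero
    (five_smul_some_eq_zero_of_sq_eq_theta_mul hb hθ hx hy h) n
  rw [← hn, xRep_two_smul_some_of_sq_eq_theta_mul hb hθ hx hy, xRep_some, xRep_some,
    xRep_zero] at hmul
  simp only [Matrix.vecCons_inj, and_true] at hmul
  grind

end QuarticRoot

open Classical in
/-- For `E : y² = x³ + bx` over a number field `K`, with
`θ₁ = -((-4i+4)ζ³ + 4ζ² - 4iζ - 2i + 5)`, `x₁² = θ₁b` and `y₁² = (θ₁+1)b·x₁`, the point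
`P₁ = (x₁, y₁)` has exact order 5, so does `φ₁(P₁) = (-x₁, i·y₁)`, the latter is not a multiple
of `P₁`, and `{P₁, φ₁(P₁)}` is a `ℤ/5ℤ`-basis of `E[5]`. -/
theorem point_and_CM_image_form_basis_of_fiveTorsion
    (K : Type*) [Field K] [NumberField K]
    (ζ i : AlgebraicClosure K) (hζ : IsPrimitiveRoot ζ 5) (hi : i ^ 2 = -1)
    (θ : AlgebraicClosure K)
    (hθ : θ = -((-4 * i + 4) * ζ ^ 3 + 4 * ζ ^ 2 - 4 * i * ζ - 2 * i + 5))
    (b : K) (hb : b ≠ 0) (bb : AlgebraicClosure K) (hbb : bb = algebraMap K (AlgebraicClosure K) b)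
    (x₁ y₁ : AlgebraicClosure K) (hx₁ : x₁ ^ 2 = θ * bb) (hy₁ : y₁ ^ 2 = (θ + 1) * bb * x₁) :
    ∃ (h : (curveBC bb 0).Nonsingular x₁ y₁) (h' : (curveBC bb 0).Nonsingular (-x₁) (i * y₁)),
      addOrderOf (WeierstrassCurve.Affine.Point.some _ _ h) = 5 ∧
      addOrderOf (WeierstrassCurve.Affine.Point.some _ _ h') = 5 ∧
      (∀ n : ℤ, WeierstrassCurve.Affine.Point.some _ _ h' ≠
        n • WeierstrassCurve.Affine.Point.some _ _ h) ∧
      IsTorsionBasis 5 (WeierstrassCurve.Affine.Point.some _ _ h)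
        (WeierstrassCurve.Affine.Point.some _ _ h') := by
  have hbb0 : bb ≠ 0 := by simpa [hbb] using hb
  have hquartic := quartic_eq_zero_of_isPrimitiveRoot hζ hi hθ
  have hx₁' : (-x₁) ^ 2 = θ * bb := by rw [neg_sq, hx₁]
  have hy₁' : (i * y₁) ^ 2 = (θ + 1) * bb * -x₁ := by linear_combination y₁ ^ 2 * hi - hy₁
  have h := curveBC_nonsingular_of_sq_eq_theta_mul hbb0 hquartic hx₁ hy₁
  have h' := curveBC_nonsingular_of_sq_eq_theta_mul hbb0 hquartic hx₁' hy₁'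
  have hP := five_smul_some_eq_zero_of_sq_eq_theta_mul hbb0 hquartic hx₁ hy₁ h
  have hQ := five_smul_some_eq_zero_of_sq_eq_theta_mul hbb0 hquartic hx₁' hy₁' h'
  have hQP := some_ne_zsmul_some_of_sq_eq_theta_mul hbb0 hquartic hx₁ hy₁ h h'
  have : Fact (Nat.Prime 5) := ⟨Nat.prime_five⟩
  have hPord := addOrderOf_eq_prime hP (some_ne_zero h)
  exact ⟨h, h', hPord, addOrderOf_eq_prime hQ (some_ne_zero h'), hQP,
    isTorsionBasis_of_card_le hPord hQ hQP card_le_of_forall_five_smul_eq_zero⟩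
end
end

section
/- Let F be a field of characteristic zero containing a primitive 5th root of unity ζ. Then for every c ∈ F the following identity of polynomials in F[x] holds: −5x¹² − 380cx⁹ + 240c²x⁶ + 1600c³x³ + 256c⁴ = −5·(x⁶ + (−36ζ³ − 36ζ² + 20)c·x³ + ((−288ζ³ − 288ζ² + 176)/5)c²)·(x⁶ + (36ζ³ + 36ζ² + 56)c·x³ + ((288ζ³ + 288ζ² + 464)/5)c²). -/
open Polynomial

lemma sextic_prod_expand (F : Type*) [CommRing F] (p q r s : F) :
    (-5 * (X ^ 6 + C p * X ^ 3 + C q) * (X ^ 6 + C r * X ^ 3 + C s) : F[X]) =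
      -5 * X ^ 12 + C (-5 * (p + r)) * X ^ 9 + C (-5 * (q + s + p * r)) * X ^ 6
        + C (-5 * (p * s + r * q)) * X ^ 3 + C (-5 * (q * s)) := by
  simp only [C_mul, C_add, C_neg, map_ofNat]
  ring

/-- Factorization over `F ∋ ζ₅` of the polynomial `r₅` whose roots are the
abscissas of the points of order 5 of `y² = x³ + c`, into two sextics. -/
theorem r₅_factorization_over_zeta₅ (F : Type*) [Field F] [CharZero F]
    (ζ : F) (hζ : IsPrimitiveRoot ζ 5) (c : F) :
    (-5 * X ^ 12 - C (380 * c) * X ^ 9 + C (240 * c ^ 2) * X ^ 6 + C (1600 * c ^ 3) * X ^ 3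
        + C (256 * c ^ 4) : F[X]) =
      -5 * (X ^ 6 + C ((-36 * ζ ^ 3 - 36 * ζ ^ 2 + 20) * c) * X ^ 3
              + C (((-288 * ζ ^ 3 - 288 * ζ ^ 2 + 176) / 5) * c ^ 2))
          * (X ^ 6 + C ((36 * ζ ^ 3 + 36 * ζ ^ 2 + 56) * c) * X ^ 3
              + C (((288 * ζ ^ 3 + 288 * ζ ^ 2 + 464) / 5) * c ^ 2)) := by
  have h5 : ζ ^ 5 = 1 := hζ.pow_eq_one
  have hne : ζ - 1 ≠ 0 := sub_ne_zero.mpr (hζ.ne_one (by norm_num))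
  have h : ζ ^ 4 + ζ ^ 3 + ζ ^ 2 + ζ + 1 = 0 := by
    have : (ζ - 1) * (ζ ^ 4 + ζ ^ 3 + ζ ^ 2 + ζ + 1) = 0 := by linear_combination h5
    exact (mul_eq_zero.mp this).resolve_left hne
  have hs : (ζ ^ 3 + ζ ^ 2) ^ 2 + (ζ ^ 3 + ζ ^ 2) = 1 := by
    linear_combination (ζ + 2) * h5 + h
  rw [sextic_prod_expand]
  have e1 : -5 * ((-36 * ζ ^ 3 - 36 * ζ ^ 2 + 20) * c + (36 * ζ ^ 3 + 36 * ζ ^ 2 + 56) * c)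
      = -(380 * c) := by ring
  have e2 : -5 * ((-288 * ζ ^ 3 - 288 * ζ ^ 2 + 176) / 5 * c ^ 2
        + (288 * ζ ^ 3 + 288 * ζ ^ 2 + 464) / 5 * c ^ 2
        + (-36 * ζ ^ 3 - 36 * ζ ^ 2 + 20) * c * ((36 * ζ ^ 3 + 36 * ζ ^ 2 + 56) * c))
      = 240 * c ^ 2 := by linear_combination 6480 * c ^ 2 * hs
  have e3 : -5 * ((-36 * ζ ^ 3 - 36 * ζ ^ 2 + 20) * c
          * ((288 * ζ ^ 3 + 288 * ζ ^ 2 + 464) / 5 * c ^ 2)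
        + (36 * ζ ^ 3 + 36 * ζ ^ 2 + 56) * c
          * ((-288 * ζ ^ 3 - 288 * ζ ^ 2 + 176) / 5 * c ^ 2))
      = 1600 * c ^ 3 := by linear_combination 20736 * c ^ 3 * hs
  have e4 : -5 * ((-288 * ζ ^ 3 - 288 * ζ ^ 2 + 176) / 5 * c ^ 2
        * ((288 * ζ ^ 3 + 288 * ζ ^ 2 + 464) / 5 * c ^ 2))
      = 256 * c ^ 4 := by linear_combination (82944 / 5) * c ^ 4 * hs
  rw [e1, e2, e3, e4, map_neg]
  ring
end

section
/- Let F be a field of characteristic zero containing a primitive 5th root of unity ζ and a primitive 3rd root of unity ζ₃. Define δ₁ := −((−132ζ₃ + 24)ζ³ + (36ζ₃ + 108)ζ² + (−96ζ₃ − 48)ζ − 48ζ₃ + 116)/5, δ₂ := −((−36ζ₃ − 108)ζ³ + (−132ζ₃ − 156)ζ² + (−168ζ₃ − 84)ζ − 84ζ₃ + 8)/5, δ₃ := −((132ζ₃ + 156)ζ³ + (−36ζ₃ + 72)ζ² + (96ζ₃ + 48)ζ + 48ζ₃ + 164)/5, δ₄ := −((36ζ₃ − 72)ζ³ + (132ζ₃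 − 24)ζ² + (168ζ₃ + 84)ζ + 84ζ₃ + 92)/5. Then for every c ∈ F the following identity of polynomials in F[x] holds: −5x¹² − 380cx⁹ + 240c²x⁶ + 1600c³x³ + 256c⁴ = −5·(x³ − δ₁c)·(x³ − δ₂c)·(x³ − δ₃c)·(x³ − δ₄c). Consequently, the twelve roots of r₅ are ζ₃ʲ·∛(δₖc) for j ∈ {0,1,2}, k ∈ {1,2,3,4}. -/
open Polynomial

/-- Factorization, over a field containing primitive 5th and 3rd roots of
unity, of the polynomial `r₅` whose roots are the abscissas of the points of order 5 of
`y² = x³ + c`, into four cubics `x³ - δₖ c`; consequently the twelve roots of `r₅` are exactly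
the cube roots of the `δₖ c`. -/
theorem r₅_factorization_over_zeta₅_zeta₃ (F : Type*) [Field F] [CharZero F]
    (ζ : F) (hζ : IsPrimitiveRoot ζ 5) (ζ₃ : F) (hζ₃ : IsPrimitiveRoot ζ₃ 3)
    (δ₁ δ₂ δ₃ δ₄ : F)
    (hδ₁ : δ₁ = -(((-132 * ζ₃ + 24) * ζ ^ 3 + (36 * ζ₃ + 108) * ζ ^ 2
      + (-96 * ζ₃ - 48) * ζ - 48 * ζ₃ + 116) / 5))
    (hδ₂ : δ₂ = -(((-36 * ζ₃ - 108) * ζ ^ 3 + (-132 * ζ₃ - 156) * ζ ^ 2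
      + (-168 * ζ₃ - 84) * ζ - 84 * ζ₃ + 8) / 5))
    (hδ₃ : δ₃ = -(((132 * ζ₃ + 156) * ζ ^ 3 + (-36 * ζ₃ + 72) * ζ ^ 2
      + (96 * ζ₃ + 48) * ζ + 48 * ζ₃ + 164) / 5))
    (hδ₄ : δ₄ = -(((36 * ζ₃ - 72) * ζ ^ 3 + (132 * ζ₃ - 24) * ζ ^ 2
      + (168 * ζ₃ + 84) * ζ + 84 * ζ₃ + 92) / 5))
    (c : F) :
    (-5 * X ^ 12 - C (380 * c) * X ^ 9 + C (240 * c ^ 2) * X ^ 6 + C (1600 * c ^ 3) * X ^ 3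
        + C (256 * c ^ 4) : F[X]) =
      -5 * (X ^ 3 - C (δ₁ * c)) * (X ^ 3 - C (δ₂ * c)) * (X ^ 3 - C (δ₃ * c))
        * (X ^ 3 - C (δ₄ * c)) ∧
    ∀ x : F,
      -5 * x ^ 12 - 380 * c * x ^ 9 + 240 * c ^ 2 * x ^ 6 + 1600 * c ^ 3 * x ^ 3
          + 256 * c ^ 4 = 0 ↔
        x ^ 3 = δ₁ * c ∨ x ^ 3 = δ₂ * c ∨ x ^ 3 = δ₃ * c ∨ x ^ 3 = δ₄ * c := by

  have hζ5 : ζ ^ 5 = 1 := hζ.pow_eq_one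
  have hζne : ζ ≠ 1 := hζ.ne_one (by norm_num)
  have hω3 : ζ₃ ^ 3 = 1 := hζ₃.pow_eq_one
  have hωne : ζ₃ ≠ 1 := hζ₃.ne_one (by norm_num)
  have q5 : ζ ^ 4 + ζ ^ 3 + ζ ^ 2 + ζ + 1 = 0 := by
    have h : (ζ - 1) * (ζ ^ 4 + ζ ^ 3 + ζ ^ 2 + ζ + 1) = 0 := by linear_combination hζ5
    rcases mul_eq_zero.mp h with h | h
    · exact absurd (sub_eq_zero.mp h) hζne
    · exact h
  have q3 : ζ₃ ^ 2 + ζ₃ + 1 = 0 := by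
    have h : (ζ₃ - 1) * (ζ₃ ^ 2 + ζ₃ + 1) = 0 := by linear_combination hω3
    rcases mul_eq_zero.mp h with h | h
    · exact absurd (sub_eq_zero.mp h) hωne
    · exact h
  have h1 : δ₁ + δ₂ + δ₃ + δ₄ = -76 := by
    rw [hδ₁, hδ₂, hδ₃, hδ₄]; ring
  have h2 : δ₁ * δ₂ + δ₁ * δ₃ + δ₁ * δ₄ + δ₂ * δ₃ + δ₂ * δ₄ + δ₃ * δ₄ = -48 := by
    rw [hδ₁, hδ₂, hδ₃, hδ₄]
    linear_combination ((-1872/5 : F) + (-7488/5 : F) * ζ + (-11232/5 : F) * ζ^2 + (-11232/5 : F) * ζ^3 + (-11232/5 : F) * ζ^4 + (-3744/5 : F) * ζ^6) * q3 + ((11664/5 : F) + (-6048/5 : F) * ζ + (-432/5 : F) * ζ^2) * q5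
  have h3 : δ₁ * δ₂ * δ₃ + δ₁ * δ₂ * δ₄ + δ₁ * δ₃ * δ₄ + δ₂ * δ₃ * δ₄ = 320 := by
    rw [hδ₁, hδ₂, hδ₃, hδ₄]
    linear_combination ((441216/25 : F) + (1764864/25 : F) * ζ + (3108672/25 : F) * ζ^2 + (758592/5 : F) * ζ^3 + (4477248/25 : F) * ζ^4 + (3556224/25 : F) * ζ^5 + (2131776/25 : F) * ζ^6 + (787968/25 : F) * ζ^7 + (20736/5 : F) * ζ^8 + (-580608/25 : F) * ζ^9) * q3 + ((-870912/25 : F) + (-452736/25 : F) * ζ + (-392256/25 : F) * ζ^2 + (-513216/25 : F) * ζ^3 + (-513216/25 : F) * ζ^4 + (435456/25 : F) * ζ^5) * q5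
  have h4 : δ₁ * δ₂ * δ₃ * δ₄ = -256 / 5 := by
    rw [hδ₁, hδ₂, hδ₃, hδ₄]
    linear_combination ((-152186112/625 : F) + (16257024/625 : F) * ζ₃ + (16257024/625 : F) * ζ₃^2 + (-641258496/625 : F) * ζ + (130056192/625 : F) * ζ * ζ₃ + (130056192/625 : F) * ζ * ζ₃^2 + (-1367753472/625 : F) * ζ^2 + (416876544/625 : F) * ζ^2 * ζ₃ + (416876544/625 : F) * ζ^2 * ζ₃^2 + (-87181056/25 : F) * ζ^3 + (31352832/25 : F) * ζ^3 * ζ₃ + (31352832/25 : F) * ζ^3 * ζ₃^2 + (-630844416/125 : F) * ζ^4 + (234669312/125 : F) * ζ^4 * ζ₃ + (234669312/125 : F) * ζ^4 * ζ₃^2 + (-3833588736/625 : F) * ζ^5 + (1559388672/625 : F) * ζ^5 * ζ₃ + (1559388672/625 : F) * ζ^5 * ζ₃^2 + (-3802722048/625 : F) * ζ^6 + (1748272896/625 : F) * ζ^6 * ζ₃ + (1748272896/625 : F) * ζ^6 * ζ₃^2 + (-3293208576/625 : F) * ζ^7 + (1592151552/625 : F) * ζ^7 * ζ₃ + (1592151552/625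 : F) * ζ^7 * ζ₃^2 + (-105774336/25 : F) * ζ^8 + (49911552/25 : F) * ζ^8 * ζ₃ + (49911552/25 : F) * ζ^8 * ζ₃^2 + (-333932544/125 : F) * ζ^9 + (171652608/125 : F) * ζ^9 * ζ₃ + (171652608/125 : F) * ζ^9 * ζ₃^2 + (-835805952/625 : F) * ζ^10 + (458555904/625 : F) * ζ^10 * ζ₃ + (458555904/625 : F) * ζ^10 * ζ₃^2 + (-379904256/625 : F) * ζ^11 + (153280512/625 : F) * ζ^11 * ζ₃ + (153280512/625 : F) * ζ^11 * ζ₃^2 + (-162922752/625 : F) * ζ^12 + (22581504/625 : F) * ζ^12 * ζ₃ + (22581504/625 : F) * ζ^12 * ζ₃^2) * q3 + ((166219776/625 : F) + (339109632/625 : F) * ζ + (485250048/625 : F) * ζ^2 + (677631744/625 : F) * ζ^3 + (173933568/125 : F) * ζ^4 + (700337664/625 : F) * ζ^5 + (530385408/625 : F) * ζ^6 + (384072192/625 : F) * ζ^7 + (192036096/625 : F) * ζ^8) * q5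
  have key : ∀ x : F,
      -5 * x ^ 12 - 380 * c * x ^ 9 + 240 * c ^ 2 * x ^ 6 + 1600 * c ^ 3 * x ^ 3
          + 256 * c ^ 4 =
        -5 * (x ^ 3 - δ₁ * c) * (x ^ 3 - δ₂ * c) * (x ^ 3 - δ₃ * c) * (x ^ 3 - δ₄ * c) := by
    intro x
    linear_combination (-5 * c * x ^ 9) * h1 + (5 * c ^ 2 * x ^ 6) * h2
      + (-5 * c ^ 3 * x ^ 3) * h3 + (5 * c ^ 4) * h4
  constructor
  · apply Polynomial.funext
    intro x
    simp only [eval_add, eval_sub, eval_mul, eval_pow, eval_C, eval_X, eval_neg, eval_ofNat]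
    linear_combination key x
  · intro x
    rw [key x]
    have h5 : (-5 : F) ≠ 0 := by norm_num
    simp [mul_eq_zero, h5, sub_eq_zero, or_assoc]
end
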